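/- arXiv:1607.02279 — 7 statements merged into one kernel-verified Lean document; each statement's English description precedes it below -/
import Mathlib

section
/- Let x be a word of length n over an alphabet of size q, with minimum period π(x) satisfying π(x) ≤ n−ℓ+1 ≤ ℓ. Then for all 1 ≤ i < j ≤ π(x), the ℓ-grams x[i..i+ℓ−1] and x[j..j+ℓ−1] are distinct. -/
/-!
Let `p = π(x)` and `r = j - i`, so `0 < r < p`. The hypotheses give `p ≤ ℓ` and `2p ≤ n + 1`.
If the ℓ-grams at `i` and `j` agreed, then `x` would agree with its shift by `r` on the `p`
consecutive positions `i, …, i + p - 1`; as every position is congruent mod `p` to one of them,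
periodicity with period `p` propagates this to all of `x`, making `r < π(x)` a period.
-/

/-- `r` is a period of the word `x : Fin n → Fin q`. -/
def IsPeriod {q n : ℕ} (x : Fin n → Fin q) (r : ℕ) : Prop :=
  0 < r ∧ ∀ i : ℕ, ∀ h : i + r < n, x ⟨i, by omega⟩ = x ⟨i + r, h⟩

/-- The minimum period `π(x)` of a word. -/
noncomputable def minPeriod {q n : ℕ} (x : Fin n → Fin q) : ℕ :=
  sInf {r | IsPeriod x r}

lemma Nat.exists_modEq_mem_Ico {p : ℕ} (hp : 0 < p) (s i : ℕ) :
    ∃ t, t ≡ s [MOD p] ∧ i ≤ t ∧ t < i + p := by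
  have hi : i ≤ p * i := Nat.le_mul_of_pos_left i hp
  refine ⟨i + (s + p * i - i) % p, ?_, Nat.le_add_right _ _, by
    have := Nat.mod_lt (s + p * i - i) hp; omega⟩
  have hsum : i + (s + p * i - i) = s + p * i := by omega
  rw [Nat.ModEq, Nat.add_mod_mod, hsum, Nat.add_mul_mod_self_left]

section Periods

variable {q n : ℕ} {x : Fin n → Fin q}

lemma IsPeriod.apply_add_mul {p : ℕ} (hp : IsPeriod x p) (a m : ℕ) (h : a + m * p < n) :
    x ⟨a, by omega⟩ = x ⟨a + m * p, h⟩ := by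
  induction m with
  | zero => simp
  | succ m ih =>
    have h' : a + m * p + p < n := by rwa [Nat.succ_mul, ← Nat.add_assoc] at h
    calc x ⟨a, _⟩ = x ⟨a + m * p, by omega⟩ := ih (by omega)
      _ = x ⟨a + m * p + p, h'⟩ := hp.2 _ h'
      _ = x ⟨a + (m + 1) * p, h⟩ := congrArg x (Fin.ext (by simp only; ring))

lemma IsPeriod.apply_eq_of_modEq {p : ℕ} (hp : IsPeriod x p) {a b : ℕ} (ha : a < n)
    (hb : b < n) (hab : a ≡ b [MOD p]) : x ⟨a, ha⟩ = x ⟨b, hb⟩ := by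
  wlog hle : a ≤ b generalizing a b
  · exact (this hb ha hab.symm (by omega)).symm
  obtain ⟨m, hm⟩ := (Nat.modEq_iff_dvd' hle).mp hab
  have hb' : b = a + m * p := by rw [Nat.mul_comm] at hm; omega
  subst hb'
  exact hp.apply_add_mul a m hb

lemma isPeriod_minPeriod (x : Fin n → Fin q) : IsPeriod x (minPeriod x) :=
  Nat.sInf_mem (s := {r | IsPeriod x r}) ⟨n + 1, Nat.succ_pos n, fun _ h => by omega⟩

lemma minPeriod_le {r : ℕ} (hr : IsPeriod x r) : minPeriod x ≤ r :=
  Nat.sInf_le hr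

lemma IsPeriod.of_shift_eq_on_window {p r i : ℕ} (hp : IsPeriod x p) (hr : 0 < r)
    (hfit : i + p + r ≤ n)
    (hwin : ∀ t, i ≤ t → t < i + p → ∀ h : t + r < n, x ⟨t, by omega⟩ = x ⟨t + r, h⟩) :
    IsPeriod x r := by
  refine ⟨hr, fun s hs => ?_⟩
  obtain ⟨t, hts, hit, htp⟩ := Nat.exists_modEq_mem_Ico hp.1 s i
  calc x ⟨s, _⟩ = x ⟨t, by omega⟩ := hp.apply_eq_of_modEq _ _ hts.symm
    _ = x ⟨t + r, by omega⟩ := hwin t hit htp _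
    _ = x ⟨s + r, hs⟩ := hp.apply_eq_of_modEq _ _ (hts.add_right r)

end Periods

theorem stmt_0_general (q n ℓ : ℕ) (x : Fin n → Fin q)
    (h1 : minPeriod x ≤ n - ℓ + 1) (h2 : n - ℓ + 1 ≤ ℓ)
    (i j : ℕ) (hij : i < j) (hj : j < minPeriod x) :
    ¬ (∀ k : ℕ, k < ℓ → ∀ (hik : i + k < n) (hjk : j + k < n),
        x ⟨i + k, hik⟩ = x ⟨j + k, hjk⟩) := by
  intro hgrams
  have hperiod : IsPeriod x (j - i) := by
    refine (isPeriod_minPeriod x).of_shift_eq_on_window (i := i) (by omega) (by omega)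
      fun t hit htp h => ?_
    calc x ⟨t, _⟩ = x ⟨i + (t - i), by omega⟩ := congrArg x (Fin.ext (by simp only; omega))
      _ = x ⟨j + (t - i), by omega⟩ := hgrams (t - i) (by omega) _ _
      _ = x ⟨t + (j - i), h⟩ := congrArg x (Fin.ext (by simp only; omega))
  have := minPeriod_le hperiod
  omega

/-- If `π(x) ≤ n - ℓ + 1 ≤ ℓ`, then any two ℓ-grams of `x` starting at distinct
(0-indexed) positions `i < j < π(x)` are distinct. -/
theorem stmt_0 (q n ℓ : ℕ) (x : Fin n → Fin q) (hℓn : ℓ ≤ n)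
    (h1 : minPeriod x ≤ n - ℓ + 1) (h2 : n - ℓ + 1 ≤ ℓ)
    (i j : ℕ) (hij : i < j) (hj : j < minPeriod x) :
    ¬ (∀ k : ℕ, k < ℓ → ∀ (hik : i + k < n) (hjk : j + k < n),
        x ⟨i + k, hik⟩ = x ⟨j + k, hjk⟩) :=
  stmt_0_general q n ℓ x h1 h2 i j hij hj
end

section
/- For ℓ ≤ n < 2ℓ and q ≥ 2, the number of distinct ℓ-gram profile vectors satisfies P_q(n,ℓ) > q^{n−1}(q−1). -/
attribute [local instance] Classical.propDecidable

/-- The ℓ-gram profile vector of `x`. -/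
noncomputable def profileVec (q n ℓ : ℕ) (x : Fin n → Fin q) : (Fin ℓ → Fin q) → ℕ :=
  fun z => ((Finset.range (n + 1 - ℓ)).filter
    (fun i => ∀ k : Fin ℓ, ∀ h : i + k.val < n, x ⟨i + k.val, h⟩ = z k)).card

/-- `P_q(n,ℓ)`: the number of distinct ℓ-gram profile vectors of words in `[q]^n`. -/
noncomputable def numProfiles (q n ℓ : ℕ) : ℕ :=
  (Finset.univ.image (profileVec q n ℓ)).card

/-!
With `m = n + 1 - ℓ ≤ ℓ` windows of length `ℓ`, the multisets of (ℓ-1)-prefixes and of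
(ℓ-1)-suffixes of the windows of a word differ only in its first and its last (ℓ-1)-window. So for
two words with the same profile, either their first and last (ℓ-1)-windows agree, and these
together with the first letters of the windows recover the whole word, or the first word has
period `m`. The profile map is therefore injective on the words without period `m`, which are all
but at most `q ^ m ≤ q ^ (n - 1)` of them, and the constant word adds one more profile. When
`ℓ = n` the profile map is injective outright.
-/

open Multiset

theorem Multiset.range_succ_eq_map (m : ℕ) : range (m + 1) = 0 ::ₘ (range m).map (· + 1) := by
  simp [Multiset.range, List.range_succ_eq_map]

theorem Multiset.pair_eq_pair_iff {α : Type*} {a b c d : α} :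
    ({a, b} : Multiset α) = {c, d} ↔ (a = c ∧ b = d) ∨ (a = d ∧ b = c) := by
  refine ⟨fun h => ?_, ?_⟩
  · have ha : a ∈ c ::ₘ {d} := by rw [← insert_eq_cons, ← h]; exact mem_cons_self a {b}
    rcases mem_cons.1 ha with rfl | had
    · exact Or.inl ⟨rfl, singleton_inj.1 ((cons_inj_right a).1 h)⟩
    · obtain rfl := mem_singleton.1 had
      rw [pair_comm c] at h
      exact Or.inr ⟨rfl, singleton_inj.1 ((cons_inj_right a).1 h)⟩
  · rintro (⟨rfl, rfl⟩ | ⟨rfl, rfl⟩)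
    · rfl
    · exact pair_comm a b

theorem Finset.card_filter_not_lt_card_image {α β : Type*} [Fintype α] [DecidableEq β]
    {p : α → Prop} [DecidablePred p] {f : α → β} (hf : ∀ x y, ¬ p x → f x = f y → x = y)
    {x₀ : α} (hx₀ : p x₀) :
    (Finset.univ.filter fun x => ¬ p x).card < (Finset.univ.image f).card := by
  set S := Finset.univ.filter fun x => ¬ p x
  have hinj : Set.InjOn f S := fun x hx y _ hxy => hf x y (Finset.mem_filter.1 hx).2 hxy
  have hx₀S : f x₀ ∉ S.image f := by
    intro h
    obtain ⟨x, hx, hfx⟩ := Finset.mem_image.1 h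
    exact (Finset.mem_filter.1 hx).2 (hf x x₀ (Finset.mem_filter.1 hx).2 hfx ▸ hx₀)
  calc S.card < (insert (f x₀) (S.image f)).card := by
        rw [Finset.card_insert_of_notMem hx₀S, Finset.card_image_of_injOn hinj]; omega
    _ ≤ (Finset.univ.image f).card :=
        Finset.card_le_card (Finset.insert_subset (Finset.mem_image_of_mem f (Finset.mem_univ x₀))
          (Finset.image_subset_image (Finset.subset_univ S)))

section Sequences

variable {α : Type*}

/-- Writing `a 0, …, a m` as `a 0 ::ₘ {a 1, …, a m} = a m ::ₘ {a 0, …, a (m-1)}` and likewise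
for `b`, the hypotheses give `{a 0, b m} = {a m, b 0}`. -/
theorem ends_eq_or_of_map_range_eq {a b : ℕ → α} {m : ℕ}
    (hinit : (range m).map a = (range m).map b)
    (htail : (range m).map (fun i => a (i + 1)) = (range m).map (fun i => b (i + 1))) :
    (a 0 = b 0 ∧ a m = b m) ∨ (a 0 = a m ∧ b 0 = b m) := by
  have hsplit (c : ℕ → α) :
      c 0 ::ₘ (range m).map (fun i => c (i + 1)) = c m ::ₘ (range m).map c := by
    rw [← map_cons c, ← range_succ, range_succ_eq_map, map_cons, map_map]
    rfl
  have hpair : ({a 0, b m} : Multiset α) = {b 0, a m} := by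
    apply (add_left_inj ((range m).map b)).1
    simp only [insert_eq_cons, cons_add, singleton_add]
    rw [← hsplit b, ← htail, cons_swap, hsplit a, hinit]
  rcases pair_eq_pair_iff.1 hpair with ⟨h0, hm⟩ | ⟨h0, hm⟩
  · exact Or.inl ⟨h0, hm.symm⟩
  · exact Or.inr ⟨h0, hm.symm⟩

theorem eq_of_map_range_succ_eq {a b : ℕ → α} {m : ℕ}
    (h : (range (m + 1)).map a = (range (m + 1)).map b) (hlt : ∀ i < m, a i = b i) :
    a m = b m := by
  rw [range_succ, map_cons, map_cons, map_congr rfl fun i hi => hlt i (mem_range.1 hi)] at h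
  exact (cons_inj_left _).1 h

def windows (s : ℕ → α) (L m : ℕ) : Multiset (Fin L → α) :=
  (range m).map fun i k => s (i + k)

theorem map_windows_castSucc (s : ℕ → α) (L m : ℕ) :
    (windows s (L + 1) m).map (fun w k => w (Fin.castSucc k)) = windows s L m := by
  rw [windows, windows, map_map]
  rfl

theorem map_windows_succ (s : ℕ → α) (L m : ℕ) :
    (windows s (L + 1) m).map (fun w k => w (Fin.succ k)) =
      (range m).map fun i (k : Fin L) => s (i + 1 + k) := by
  rw [windows, map_map]
  refine map_congr rfl fun i _ => funext fun k => ?_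
  simp only [Function.comp_apply, Fin.val_succ]
  rw [add_right_comm, add_assoc]

theorem map_windows_zero (s : ℕ → α) (L m : ℕ) :
    (windows s (L + 1) m).map (fun w => w 0) = (range m).map s := by
  rw [windows, map_map]
  rfl

theorem eqOn_of_windows_eq {s t : ℕ → α} {L m : ℕ} (hm : m ≤ L + 1)
    (h : windows s (L + 1) m = windows t (L + 1) m) (hs : ¬ ∀ p < L, s p = s (p + m)) :
    ∀ p < m + L, s p = t p := by
  have hinit := map_windows_castSucc s L m
  rw [h, map_windows_castSucc] at hinit
  have htail := map_windows_succ s L m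
  rw [h, map_windows_succ] at htail
  rcases ends_eq_or_of_map_range_eq hinit.symm htail.symm with ⟨h0, hm'⟩ | ⟨hper, -⟩
  · have hhead (p) (hp : p < L) : s p = t p := by
      simpa using congrFun h0 ⟨p, hp⟩
    intro p hp
    by_cases hpL : p < L
    · exact hhead p hpL
    by_cases hmp : m ≤ p
    · simpa [Nat.add_sub_cancel' hmp] using congrFun hm' ⟨p - m, by omega⟩
    obtain rfl : m = p + 1 := by omega
    have hcol := map_windows_zero s L (p + 1)
    rw [h, map_windows_zero] at hcol
    exact eq_of_map_range_succ_eq hcol.symm fun i hi => hhead i (by omega)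
  · exact absurd (fun p hp => by simpa [add_comm] using congrFun hper ⟨p, hp⟩) hs

end Sequences

section Words

variable {α : Type*} {n : ℕ}

theorem exists_seq_extending (hn : 0 < n) (x : Fin n → α) :
    ∃ s : ℕ → α, ∀ i : Fin n, x i = s i :=
  ⟨fun i => x ⟨i % n, Nat.mod_lt i hn⟩, fun i => congrArg x (Fin.ext (Nat.mod_eq_of_lt i.2).symm)⟩

def HasPeriod (m : ℕ) (x : Fin n → α) : Prop :=
  ∀ p (h : p + m < n), x ⟨p, by omega⟩ = x ⟨p + m, h⟩

theorem HasPeriod.ext {m : ℕ} (hm : 0 < m) {x y : Fin n → α}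
    (hx : HasPeriod m x) (hy : HasPeriod m y)
    (h : ∀ i : Fin n, (i : ℕ) < m → x i = y i) : x = y := by
  suffices ∀ i (hi : i < n), x ⟨i, hi⟩ = y ⟨i, hi⟩ from funext fun i => this i i.2
  intro i
  induction i using Nat.strong_induction_on with
  | _ i ih =>
    intro hi
    by_cases him : i < m
    · exact h _ him
    · have hper : i - m + m < n := by omega
      have hx' := hx (i - m) hper
      have hy' := hy (i - m) hper
      simp only [Nat.sub_add_cancel (not_lt.1 him)] at hx' hy'
      rw [← hx', ← hy', ih (i - m) (by omega)]

theorem card_hasPeriod_le [Fintype α] {m : ℕ} (hm : 0 < m) (hmn : m ≤ n) :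
    ((Finset.univ : Finset (Fin n → α)).filter (HasPeriod m)).card ≤ Fintype.card α ^ m := by
  calc ((Finset.univ : Finset (Fin n → α)).filter (HasPeriod m)).card
      ≤ (Finset.univ : Finset (Fin m → α)).card := by
        refine Finset.card_le_card_of_injOn (fun x j => x (Fin.castLE hmn j))
          (fun _ _ => Finset.mem_coe.2 (Finset.mem_univ _)) fun x hx y hy hxy => ?_
        simp only [Finset.coe_filter, Finset.mem_univ, true_and, Set.mem_ofPred_eq] at hx hy
        exact hx.ext hm hy fun i hi => congrFun hxy ⟨i, hi⟩
    _ = Fintype.card α ^ m := by simp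

end Words

section Profiles

variable {q n ℓ : ℕ}

theorem profileVec_eq_count_windows (hℓn : ℓ ≤ n) {x : Fin n → Fin q} {s : ℕ → Fin q}
    (hs : ∀ i : Fin n, x i = s i) (z : Fin ℓ → Fin q) :
    profileVec q n ℓ x z = (windows s ℓ (n + 1 - ℓ)).count z := by
  rw [windows, count_map, profileVec, Finset.card, Finset.filter_val, Finset.range_val]
  congr 1
  refine filter_congr fun i hi => ?_
  have hi : i + ℓ ≤ n := by rw [mem_range] at hi; omega
  simp only [hs, funext_iff]
  exact ⟨fun h k => (h k (by omega)).symm, fun h k _ => (h k).symm⟩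

theorem windows_eq_of_profileVec_eq (hℓn : ℓ ≤ n) {x y : Fin n → Fin q} {s t : ℕ → Fin q}
    (hs : ∀ i : Fin n, x i = s i) (ht : ∀ i : Fin n, y i = t i)
    (h : profileVec q n ℓ x = profileVec q n ℓ y) :
    windows s ℓ (n + 1 - ℓ) = windows t ℓ (n + 1 - ℓ) :=
  Multiset.ext.2 fun z => by
    rw [← profileVec_eq_count_windows hℓn hs, ← profileVec_eq_count_windows hℓn ht, h]

theorem eq_of_profileVec_eq (hℓn : ℓ ≤ n) (hn : n < 2 * ℓ) {x y : Fin n → Fin q}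
    (h : profileVec q n ℓ x = profileVec q n ℓ y) (hx : ¬ HasPeriod (n + 1 - ℓ) x) : x = y := by
  obtain ⟨s, hs⟩ := exists_seq_extending (by omega) x
  obtain ⟨t, ht⟩ := exists_seq_extending (by omega) y
  obtain ⟨L, rfl⟩ : ∃ L, ℓ = L + 1 := ⟨ℓ - 1, by omega⟩
  have hst := eqOn_of_windows_eq (by omega) (windows_eq_of_profileVec_eq hℓn hs ht h)
    fun hper => hx fun p hp => by simpa only [hs] using hper p (by omega)
  exact funext fun i => by rw [hs, ht]; exact hst i (by omega)

theorem profileVec_self_injective : Function.Injective (profileVec q n n) := by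
  intro x y h
  have hcount := congrFun h x
  simp only [profileVec, Nat.add_sub_cancel_left, Finset.range_one, Finset.filter_singleton,
    zero_add, Fin.eta, implies_true, if_true, Finset.card_singleton] at hcount
  split_ifs at hcount with hyx
  · exact funext fun k => (hyx k k.2).symm
  · simp at hcount

end Profiles

/-- For `ℓ ≤ n < 2ℓ` and `q ≥ 2`, `P_q(n,ℓ) > q^{n−1}(q−1)`. -/
theorem stmt_4 (q n ℓ : ℕ) (hq : 2 ≤ q) (hℓn : ℓ ≤ n) (hn2 : n < 2 * ℓ) :
    q ^ (n - 1) * (q - 1) < numProfiles q n ℓ := by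
  have hqn : q ^ (n - 1) * q = q ^ n := by rw [← pow_succ]; congr 1; omega
  have hsub : q ^ (n - 1) * (q - 1) = q ^ n - q ^ (n - 1) := by rw [Nat.mul_sub_one, hqn]
  rcases hℓn.eq_or_lt with rfl | hlt
  · have hcard : numProfiles q ℓ ℓ = q ^ ℓ := by
      rw [numProfiles, Finset.card_image_of_injective _ profileVec_self_injective]; simp
    rw [hcard, hsub]
    exact Nat.sub_lt (by positivity) (by positivity)
  · have hnonper := Finset.card_filter_not_lt_card_image (f := profileVec q n ℓ)
      (fun x y hx h => eq_of_profileVec_eq hℓn hn2 h hx)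
      (x₀ := fun _ => ⟨0, by omega⟩) fun _ _ => rfl
    have hper := card_hasPeriod_le (α := Fin q) (n := n) (m := n + 1 - ℓ) (by omega) (by omega)
    have htotal := Finset.card_filter_add_card_filter_not
      (s := (Finset.univ : Finset (Fin n → Fin q))) (HasPeriod (n + 1 - ℓ))
    have hqm : q ^ (n + 1 - ℓ) ≤ q ^ (n - 1) := Nat.pow_le_pow_right (by omega) (by omega)
    simp only [Finset.card_univ, Fintype.card_fun, Fintype.card_fin] at hper htotal
    rw [numProfiles]
    omega
end

section
/- Let 2a ≤ ℓ, let A = {u_1,...,u_M} be a set of distinct addresses of length a over [q], and let x = z_1 z_2 ⋯ z_M and x' = z'_1 z'_2 ⋯ z'_M be distinct (A,ℓ)-addressable words. Then the set of ℓ-grams of x differs from the set of ℓ-grams of x'; in particular their ℓ-gram profile vectors differ. -/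
/-!
An address `u m` can occur in an addressable word, inside a single block, only as the prefix of
block `m`. Hence if an `ℓ`-gram of `x'` equals the block `z_i` of `x`, it must start at `iℓ`:
a start inside a block would put the address `u i` inside a block of `x'`, and a start straddling
two blocks would put the next address of `x'` inside `z_i` (here `2a ≤ ℓ` makes that address fit
inside `z_i`). So the block of `x` containing a position where `x` and `x'` differ is an
`ℓ`-gram of `x` but not of `x'`, and it has positive count in the profile of `x` only.
-/

/-- `x` (viewed as a word of length `M*ℓ`, blocks `z_i = x[iℓ..iℓ+ℓ−1]`) is
`(A,ℓ)`-addressable for the address list `u : Fin M → (Fin a → Fin q)`: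
(C1) each block `z_i` has prefix `u i`; (C2) no address occurs as an `a`-gram
of a block starting at (0-indexed) positions `1,…,ℓ−a`. -/
def Addressable (q a ℓ M : ℕ) (u : Fin M → (Fin a → Fin q)) (x : ℕ → Fin q) : Prop :=
  (∀ i : Fin M, ∀ k : Fin a, x (i.val * ℓ + k.val) = u i k) ∧
  (∀ i : Fin M, ∀ j : ℕ, 1 ≤ j → j + a ≤ ℓ → ∀ m : Fin M,
    ¬ (∀ k : Fin a, x (i.val * ℓ + j + k.val) = u m k))

/-- The set of ℓ-grams of the length-`n` word `x`. -/
def gramSet (q ℓ n : ℕ) (x : ℕ → Fin q) : Set (Fin ℓ → Fin q) :=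
  {g | ∃ j : ℕ, j + ℓ ≤ n ∧ ∀ k : Fin ℓ, x (j + k.val) = g k}

/-- The ℓ-gram profile vector of the length-`n` word `x`. -/
def profileN (q ℓ n : ℕ) (x : ℕ → Fin q) : (Fin ℓ → Fin q) → ℕ :=
  fun z => ((Finset.range (n + 1 - ℓ)).filter
    (fun j => ∀ k : Fin ℓ, x (j + k.val) = z k)).card

lemma exists_block_decomposition {M ℓ p : ℕ} (hp : p < M * ℓ) :
    ∃ (m : Fin M) (r : ℕ), r < ℓ ∧ p = m.val * ℓ + r := by
  have hℓ : 0 < ℓ := Nat.pos_of_ne_zero (by rintro rfl; simp at hp)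
  refine ⟨⟨p / ℓ, (Nat.div_lt_iff_lt_mul hℓ).mpr hp⟩, p % ℓ, Nat.mod_lt _ hℓ, ?_⟩
  exact (Nat.div_add_mod' p ℓ).symm

lemma block_mem_gramSet {q ℓ M : ℕ} (x : ℕ → Fin q) (i : Fin M) :
    (fun k : Fin ℓ => x (i.val * ℓ + k.val)) ∈ gramSet q ℓ (M * ℓ) x :=
  ⟨i.val * ℓ, by nlinarith [i.isLt], fun _ => rfl⟩

lemma mem_gramSet_iff_profileN_ne_zero {q ℓ n : ℕ} (x : ℕ → Fin q) (g : Fin ℓ → Fin q) :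
    g ∈ gramSet q ℓ n x ↔ profileN q ℓ n x g ≠ 0 := by
  rw [profileN, ne_eq, Finset.card_eq_zero, ← ne_eq, ← Finset.nonempty_iff_ne_empty,
    Finset.filter_nonempty_iff]
  refine exists_congr fun j => and_congr_left fun _ => ?_
  rw [Finset.mem_range]
  omega

lemma gramSet_eq_of_profileN_eq {q ℓ n : ℕ} {x x' : ℕ → Fin q}
    (h : profileN q ℓ n x = profileN q ℓ n x') : gramSet q ℓ n x = gramSet q ℓ n x' := by
  ext g
  rw [mem_gramSet_iff_profileN_ne_zero, mem_gramSet_iff_profileN_ne_zero, h]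

namespace Addressable

variable {q a ℓ M : ℕ} {u : Fin M → Fin a → Fin q}

lemma eq_zero_and_eq_of_address {y : ℕ → Fin q} (hu : Function.Injective u)
    (hy : Addressable q a ℓ M u y) {m i : Fin M} {r : ℕ} (hr : r + a ≤ ℓ)
    (h : ∀ k : Fin a, y (m.val * ℓ + r + k.val) = u i k) : r = 0 ∧ m = i := by
  rcases Nat.eq_zero_or_pos r with rfl | hr0
  · refine ⟨rfl, hu (funext fun k => ?_)⟩
    rw [← hy.1 m k, ← h k, Nat.add_zero]
  · exact (hy.2 m r hr0 hr i h).elim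

lemma eq_of_gram_eq_block {w y : ℕ → Fin q} (hℓ : 2 * a ≤ ℓ) (hu : Function.Injective u)
    (hw : Addressable q a ℓ M u w) (hy : Addressable q a ℓ M u y) {i : Fin M} {j : ℕ}
    (hj : j + ℓ ≤ M * ℓ) (h : ∀ k : Fin ℓ, y (j + k.val) = w (i.val * ℓ + k.val)) :
    j = i.val * ℓ := by
  rcases Nat.eq_zero_or_pos ℓ with rfl | hℓ0
  · simpa using hj
  obtain ⟨m, r, hrℓ, rfl⟩ := exists_block_decomposition (show j < M * ℓ by omega)
  by_cases hra : r + a ≤ ℓ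
  · obtain ⟨rfl, rfl⟩ := hy.eq_zero_and_eq_of_address hu hra fun k => by
      rw [h ⟨k, by omega⟩, hw.1 i k]
    rfl
  · -- the gram straddles blocks `m` and `m + 1`, so `z_i` contains the address `u (m + 1)`
    have hm : m.val + 1 < M := by
      by_contra hM
      nlinarith
    have hoffset : ℓ - r = 0 := (hw.eq_zero_and_eq_of_address (r := ℓ - r) hu (by omega)
      (i := ⟨m.val + 1, hm⟩) fun k => by
        rw [← hy.1 ⟨m.val + 1, hm⟩ k, Nat.add_assoc, ← h ⟨ℓ - r + k, by omega⟩]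
        congr 1
        simp only [Nat.add_mul, Nat.one_mul]
        omega).1
    omega

lemma block_notMem_gramSet {x x' : ℕ → Fin q} (hℓ : 2 * a ≤ ℓ) (hu : Function.Injective u)
    (hx : Addressable q a ℓ M u x) (hx' : Addressable q a ℓ M u x') {i : Fin M} {r : ℕ}
    (hr : r < ℓ) (hne : x (i.val * ℓ + r) ≠ x' (i.val * ℓ + r)) :
    (fun k : Fin ℓ => x (i.val * ℓ + k.val)) ∉ gramSet q ℓ (M * ℓ) x' := by
  rintro ⟨j, hj, h⟩
  obtain rfl := eq_of_gram_eq_block hℓ hu hx hx' hj h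
  exact hne (h ⟨r, hr⟩).symm

end Addressable

theorem stmt_8_general (q a ℓ M : ℕ) (hℓ : 2 * a ≤ ℓ)
    (u : Fin M → (Fin a → Fin q)) (hu : Function.Injective u)
    (x x' : ℕ → Fin q)
    (hx : Addressable q a ℓ M u x) (hx' : Addressable q a ℓ M u x')
    (hne : ∃ i : ℕ, i < M * ℓ ∧ x i ≠ x' i) :
    gramSet q ℓ (M * ℓ) x ≠ gramSet q ℓ (M * ℓ) x' ∧
    profileN q ℓ (M * ℓ) x ≠ profileN q ℓ (M * ℓ) x' := by
  obtain ⟨p, hp, hxp⟩ := hne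
  obtain ⟨i, r, hr, rfl⟩ := exists_block_decomposition hp
  have hgram : gramSet q ℓ (M * ℓ) x ≠ gramSet q ℓ (M * ℓ) x' := fun h =>
    Addressable.block_notMem_gramSet hℓ hu hx hx' hr hxp (h ▸ block_mem_gramSet x i)
  exact ⟨hgram, mt gramSet_eq_of_profileN_eq hgram⟩

/-- Distinct `(A,ℓ)`-addressable words (for distinct addresses, `2a ≤ ℓ`) have
different sets of ℓ-grams, and in particular different ℓ-gram profile vectors. -/
theorem stmt_8 (q a ℓ M : ℕ) (ha : 1 ≤ a) (hℓ : 2 * a ≤ ℓ)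
    (u : Fin M → (Fin a → Fin q)) (hu : Function.Injective u)
    (x x' : ℕ → Fin q)
    (hx : Addressable q a ℓ M u x) (hx' : Addressable q a ℓ M u x')
    (hne : ∃ i : ℕ, i < M * ℓ ∧ x i ≠ x' i) :
    gramSet q ℓ (M * ℓ) x ≠ gramSet q ℓ (M * ℓ) x' ∧
    profileN q ℓ (M * ℓ) x ≠ profileN q ℓ (M * ℓ) x' :=
  stmt_8_general q a ℓ M hℓ u hu x x' hx hx' hne
end

section
/- With A* = {u ∈ [q]^a : Σ_i u_i ≡ 0 mod q} and 2a ≤ ℓ, the encoding map encode₂ of Algorithm 2 is injective on {1,...,q−1}^{(ℓ−a)M} with M = q^{a−1}, and every output is (A*,ℓ)-addressable. Consequently, for n = q^{a−1}ℓ with 4 ≤ 2a ≤ ℓ, the number of distinct ℓ-gram profile vectors satisfies P_q(n,ℓ) ≥ (q−1)^{q^{a−1}(ℓ−a)}. -/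
attribute [local instance] Classical.propDecidable

/-- The block construction of Algorithm 2: starting from the address `u`
(a list of length `a`), after `m` steps append the `c m`-th element (1-indexed)
of `[q] \ {z_bad}`, where `z_bad` is the negative (mod `q`) of the sum of the
last `a − 1` symbols. -/
def blockList (q a : ℕ) (hq : 0 < q) (u : List (Fin q)) (c : ℕ → ℕ) : ℕ → List (Fin q)
  | 0 => u
  | m + 1 =>
    let z := blockList q a hq u c m
    let zbad : ℕ := (q - (((z.reverse.take (a - 1)).map Fin.val).sum % q)) % q
    let t := c m
    z ++ [⟨(if t ≤ zbad then t - 1 else t) % q, Nat.mod_lt _ hq⟩]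

/-- Algorithm 2, `encode₂`: concatenate the `M` blocks, block `i` built from
address `u i` and data `c i`. -/
def encode2 (q a ℓ M : ℕ) (hq : 0 < q) (u : Fin M → List (Fin q))
    (c : Fin M → ℕ → ℕ) : List (Fin q) :=
  (List.ofFn (fun i : Fin M => blockList q a hq (u i) (c i) (ℓ - a))).flatten

/-- `(A,ℓ)`-addressability for list words. -/
def AddressableL (q a ℓ M : ℕ) (u : Fin M → List (Fin q)) (x : List (Fin q)) : Prop :=
  x.length = M * ℓ ∧
  (∀ i : Fin M, (x.drop (i.val * ℓ)).take a = u i) ∧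
  (∀ i : Fin M, ∀ j : ℕ, 1 ≤ j → j + a ≤ ℓ → ∀ m : Fin M,
    (x.drop (i.val * ℓ + j)).take a ≠ u m)

/-!
Each appended symbol of a block avoids the one value that would make the length-`a` window
ending at it sum to `0` mod `q`, so no address of `A*` occurs inside a block; the remaining
`q - 1` choices are distinct, so the data can be read back off each block. In an
`(A*, ℓ)`-addressable word every block is an `ℓ`-gram that starts with an address and contains
no other one; when `2a ≤ ℓ` such an `ℓ`-gram occurs in an addressable word only as the block
with that address. Hence the `ℓ`-gram profile determines every block, and the
`(q - 1)^(M(ℓ - a))` encoded words have pairwise distinct profiles.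
-/

namespace List

variable {α : Type*}

lemma take_drop_take_of_add_le {l : List α} {p j a ℓ : ℕ} (h : j + a ≤ ℓ) :
    (((l.drop p).take ℓ).drop j).take a = (l.drop (p + j)).take a := by
  rw [drop_take, take_take, drop_drop, min_eq_left (by omega)]

lemma drop_mul_flatten {ℓ : ℕ} :
    ∀ (L : List (List α)) (i : ℕ), (∀ l ∈ L, l.length = ℓ) →
      L.flatten.drop (i * ℓ) = (L.drop i).flatten
  | _, 0, _ => by simp
  | [], _ + 1, _ => by simp
  | l :: L, i + 1, hL => by
    rw [flatten_cons, Nat.succ_mul, add_comm, ← drop_drop, drop_left' (hL l mem_cons_self),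
      drop_mul_flatten L i fun l' hl' => hL l' (mem_cons_of_mem l hl'), drop_succ_cons]

lemma take_drop_mul_flatten_ofFn {M ℓ : ℕ} (B : Fin M → List α) (hB : ∀ i, (B i).length = ℓ)
    (i : Fin M) : (((ofFn B).flatten.drop (i * ℓ)).take ℓ) = B i := by
  rw [drop_mul_flatten _ _ (by simpa using hB), drop_eq_getElem_cons (by simp), List.getElem_ofFn,
    flatten_cons, take_left' (hB i)]

lemma length_flatten_ofFn {M ℓ : ℕ} (B : Fin M → List α) (hB : ∀ i, (B i).length = ℓ) :
    (ofFn B).flatten.length = M * ℓ := by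
  simp [length_flatten, Function.comp_def, hB]

lemma eq_of_take_drop_mul_eq {ℓ : ℕ} :
    ∀ (M : ℕ) {x y : List α}, x.length = M * ℓ → y.length = M * ℓ →
      (∀ i < M, (x.drop (i * ℓ)).take ℓ = (y.drop (i * ℓ)).take ℓ) → x = y
  | 0, x, y, hx, hy, _ => by simp_all
  | M + 1, x, y, hx, hy, h => by
    rw [← take_append_drop ℓ x, ← take_append_drop ℓ y]
    congr 1
    · simpa using h 0 (by omega)
    · refine eq_of_take_drop_mul_eq (ℓ := ℓ) M (by rw [length_drop, hx, Nat.succ_mul]; omega)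
        (by rw [length_drop, hy, Nat.succ_mul]; omega)
        fun i hi => ?_
      simpa [drop_drop, Nat.succ_mul, add_comm] using h (i + 1) (by omega)

end List

section Skip

/- `if t ≤ zb then t - 1 else t` is the `t`-th element (from `1`) of `[0, q) \ {zb}`. -/

variable {q zb t t' : ℕ}

lemma skip_lt (hzb : zb < q) (ht : t ≤ q - 1) : (if t ≤ zb then t - 1 else t) < q := by
  split_ifs <;> omega

lemma skip_ne (ht : 1 ≤ t) : (if t ≤ zb then t - 1 else t) ≠ zb := by
  split_ifs <;> omega

lemma skip_inj (ht : 1 ≤ t) (ht' : 1 ≤ t')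
    (h : (if t ≤ zb then t - 1 else t) = (if t' ≤ zb then t' - 1 else t')) : t = t' := by
  split_ifs at h <;> omega

end Skip

lemma add_mod_eq_zero_iff {q S v : ℕ} (hv : v < q) : (S + v) % q = 0 ↔ v = (q - S % q) % q := by
  have hS : S % q < q := Nat.mod_lt _ (by omega)
  rw [Nat.add_mod_eq_ite, Nat.mod_eq_of_lt hv]
  by_cases h0 : S % q = 0
  · simp only [h0, Nat.sub_zero, Nat.mod_self]
    split_ifs <;> omega
  · rw [Nat.mod_eq_of_lt (show q - S % q < q by omega)]
    split_ifs <;> omega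

section Block

variable {q : ℕ} (a : ℕ) (hq : 0 < q) (u : List (Fin q))

lemma length_blockList (c : ℕ → ℕ) (m : ℕ) : (blockList q a hq u c m).length = u.length + m := by
  induction m with
  | zero => rfl
  | succ m ih => rw [blockList, List.length_append, ih, List.length_singleton, add_assoc]

lemma blockList_prefix (c : ℕ → ℕ) {m m' : ℕ} (h : m ≤ m') :
    blockList q a hq u c m <+: blockList q a hq u c m' := by
  induction m', h using Nat.le_induction with
  | base => exact List.prefix_rfl
  | succ m' _ ih => exact ih.trans (by rw [blockList]; exact List.prefix_append _ _)

lemma take_blockList {n : ℕ} (hu : u.length = n) (c : ℕ → ℕ) (m : ℕ) :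
    (blockList q a hq u c m).take n = u := by
  subst hu
  exact (List.prefix_iff_eq_take.mp (blockList_prefix a hq u c (Nat.zero_le m))).symm

lemma blockList_drop_succ_sum_ne_zero (ha : 1 ≤ a) (hu : u.length = a) (c : ℕ → ℕ) (m : ℕ)
    (hc : 1 ≤ c m ∧ c m ≤ q - 1) :
    (((blockList q a hq u c (m + 1)).drop (m + 1)).map Fin.val).sum % q ≠ 0 := by
  have hlen := length_blockList a hq u c m
  have hlast : (blockList q a hq u c m).drop (m + 1) =
      ((blockList q a hq u c m).reverse.take (a - 1)).reverse := by
    rw [List.take_reverse, List.reverse_reverse, hlen, hu]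
    congr 1
    omega
  have hzb := Nat.mod_lt
    (q - (((blockList q a hq u c m).reverse.take (a - 1)).map Fin.val).sum % q) hq
  rw [blockList, List.drop_append_of_le_length (by omega), hlast, List.map_append, List.sum_append,
    List.map_reverse, List.sum_reverse, List.map_singleton, List.sum_singleton,
    Fin.val_mk, Nat.mod_eq_of_lt (skip_lt hzb hc.2)]
  exact (add_mod_eq_zero_iff (skip_lt hzb hc.2)).not.mpr (skip_ne hc.1)

lemma blockList_window_sum_ne_zero (ha : 1 ≤ a) (hu : u.length = a) (c : ℕ → ℕ) {N j : ℕ}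
    (hj : 1 ≤ j) (hjN : j ≤ N) (hc : 1 ≤ c (j - 1) ∧ c (j - 1) ≤ q - 1) :
    ((((blockList q a hq u c N).drop j).take a).map Fin.val).sum % q ≠ 0 := by
  obtain ⟨m, rfl⟩ : ∃ m, j = m + 1 := ⟨j - 1, by omega⟩
  obtain ⟨r, hr⟩ := blockList_prefix a hq u c hjN
  have hlen := length_blockList a hq u c (m + 1)
  rw [← hr, List.drop_append_of_le_length (by omega),
    List.take_left' (by rw [List.length_drop, hlen, hu]; omega)]
  exact blockList_drop_succ_sum_ne_zero a hq u ha hu c m hc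

lemma eq_of_blockList_eq {c c' : ℕ → ℕ} {N : ℕ} (hc : ∀ m < N, 1 ≤ c m ∧ c m ≤ q - 1)
    (hc' : ∀ m < N, 1 ≤ c' m ∧ c' m ≤ q - 1)
    (h : blockList q a hq u c N = blockList q a hq u c' N) : ∀ m < N, c m = c' m := by
  induction N with
  | zero => intro m hm; omega
  | succ N ih =>
    rw [blockList, blockList] at h
    obtain ⟨hpre, hlast⟩ :=
      List.append_inj h (by rw [length_blockList, length_blockList])
    intro m hm
    rcases Nat.lt_succ_iff_lt_or_eq.mp hm with hm | rfl
    · exact ih (fun k hk => hc k (by omega)) (fun k hk => hc' k (by omega)) hpre m hm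
    · have hval := congrArg Fin.val (List.head_eq_of_cons_eq hlast)
      simp only [hpre] at hval
      have hzb := Nat.mod_lt
        (q - (((blockList q a hq u c' m).reverse.take (a - 1)).map Fin.val).sum % q) hq
      rw [Nat.mod_eq_of_lt (skip_lt hzb (hc m hm).2),
        Nat.mod_eq_of_lt (skip_lt hzb (hc' m hm).2)] at hval
      exact skip_inj (hc m hm).1 (hc' m hm).1 hval

end Block

section Encode

variable {q a ℓ M : ℕ} (hq : 0 < q) {u : Fin M → List (Fin q)}

lemma length_encode2 (hulen : ∀ i, (u i).length = a) (haℓ : a ≤ ℓ) (c : Fin M → ℕ → ℕ) :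
    (encode2 q a ℓ M hq u c).length = M * ℓ :=
  List.length_flatten_ofFn _ fun i => by rw [length_blockList, hulen]; omega

lemma take_drop_encode2 (hulen : ∀ i, (u i).length = a) (haℓ : a ≤ ℓ) (c : Fin M → ℕ → ℕ)
    (i : Fin M) :
    ((encode2 q a ℓ M hq u c).drop (i * ℓ)).take ℓ = blockList q a hq (u i) (c i) (ℓ - a) :=
  List.take_drop_mul_flatten_ofFn _ (fun i => by rw [length_blockList, hulen]; omega) i

lemma eq_of_encode2_eq (hulen : ∀ i, (u i).length = a) (haℓ : a ≤ ℓ) {c c' : Fin M → ℕ → ℕ}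
    (hc : ∀ i m, m < ℓ - a → 1 ≤ c i m ∧ c i m ≤ q - 1)
    (hc' : ∀ i m, m < ℓ - a → 1 ≤ c' i m ∧ c' i m ≤ q - 1)
    (h : encode2 q a ℓ M hq u c = encode2 q a ℓ M hq u c') :
    ∀ i m, m < ℓ - a → c i m = c' i m := fun i =>
  eq_of_blockList_eq a hq (u i) (hc i) (hc' i) <| by
    rw [← take_drop_encode2 hq hulen haℓ c i, ← take_drop_encode2 hq hulen haℓ c' i, h]

lemma encode2_addressable (ha : 1 ≤ a) (haℓ : a ≤ ℓ) (hulen : ∀ i, (u i).length = a)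
    (husum : ∀ i, (((u i).map Fin.val).sum) % q = 0) {c : Fin M → ℕ → ℕ}
    (hc : ∀ i m, m < ℓ - a → 1 ≤ c i m ∧ c i m ≤ q - 1) :
    AddressableL q a ℓ M u (encode2 q a ℓ M hq u c) := by
  refine ⟨length_encode2 hq hulen haℓ c, fun i => ?_, fun i j hj hja m heq => ?_⟩
  · have h := List.take_drop_take_of_add_le (l := encode2 q a ℓ M hq u c) (p := i * ℓ)
      (j := 0) (show 0 + a ≤ ℓ by omega)
    rwa [List.drop_zero, add_zero, take_drop_encode2 hq hulen haℓ,
      take_blockList a hq (u i) (hulen i), eq_comm] at h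
  · have hsum := husum m
    rw [← heq, ← List.take_drop_take_of_add_le hja, take_drop_encode2 hq hulen haℓ] at hsum
    exact blockList_window_sum_ne_zero a hq (u i) ha (hulen i) (c i) hj (by omega)
      (hc i (j - 1) (by omega)) hsum

end Encode

section Profile

variable {q a ℓ M : ℕ}

def wordOfList {n : ℕ} (x : List (Fin q)) (h : x.length = n) : Fin n → Fin q :=
  fun k => x[k.val]'(h ▸ k.isLt)

lemma profileVec_wordOfList_pos_iff {n : ℕ} {x w : List (Fin q)} (hx : x.length = n)
    (hw : w.length = ℓ) :
    0 < profileVec q n ℓ (wordOfList x hx) (wordOfList w hw) ↔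
      ∃ p, p + ℓ ≤ n ∧ (x.drop p).take ℓ = w := by
  simp only [profileVec, Finset.card_pos, Finset.filter_nonempty_iff, Finset.mem_range]
  constructor
  · rintro ⟨p, hp, hmatch⟩
    refine ⟨p, by omega, List.ext_getElem (by simp [hx, hw]; omega) fun k hk hk' => ?_⟩
    simpa [wordOfList] using hmatch ⟨k, hw ▸ hk'⟩ (by simp [hx] at hk; omega)
  · rintro ⟨p, hp, rfl⟩
    exact ⟨p, by omega, fun k hk => by simp [wordOfList]⟩

/- An unaligned occurrence of a block would either put the block's address strictly inside some
block of `x`, or put the address of the next block of `x` strictly inside the block. -/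
lemma AddressableL.eq_mul_of_take_drop_eq {u : Fin M → List (Fin q)} {x w : List (Fin q)}
    (hx : AddressableL q a ℓ M u x) (huinj : Function.Injective u) (hℓ : 2 * a ≤ ℓ) {i : Fin M}
    (hw : w.take a = u i)
    (hwint : ∀ j, 1 ≤ j → j + a ≤ ℓ → ∀ m, (w.drop j).take a ≠ u m)
    {p : ℕ} (hp : p + ℓ ≤ M * ℓ) (hpw : (x.drop p).take ℓ = w) : p = i * ℓ := by
  obtain ⟨-, hpre, hint⟩ := hx
  rcases Nat.eq_zero_or_pos ℓ with rfl | hℓ0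
  · simpa using hp
  have hpdiv : p = p / ℓ * ℓ + p % ℓ := (Nat.div_add_mod' p ℓ).symm
  have hdiv : p / ℓ < M := (Nat.div_lt_iff_lt_mul hℓ0).2 (by omega)
  have hj : p % ℓ < ℓ := Nat.mod_lt p hℓ0
  have hwa : (x.drop p).take a = u i := by rw [← hw, ← hpw, List.take_take, min_eq_left (by omega)]
  rcases Nat.eq_zero_or_pos (p % ℓ) with hj0 | hj0
  · rw [hpdiv, hj0, add_zero] at hwa ⊢
    rw [← Fin.ext_iff.mp (huinj ((hpre ⟨p / ℓ, hdiv⟩).symm.trans hwa))]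
  exfalso
  by_cases hja : p % ℓ + a ≤ ℓ
  · exact hint ⟨p / ℓ, hdiv⟩ (p % ℓ) hj0 hja i (hpdiv ▸ hwa)
  · have hnext : p / ℓ + 1 < M := by
      refine Nat.lt_of_mul_lt_mul_right (a := ℓ) ?_
      rw [Nat.succ_mul]
      omega
    refine hwint (ℓ - p % ℓ) (by omega) (by omega) ⟨p / ℓ + 1, hnext⟩ ?_
    rw [← hpw, List.take_drop_take_of_add_le (by omega), ← hpre ⟨p / ℓ + 1, hnext⟩, Nat.succ_mul]
    congr 2
    omega

lemma AddressableL.eq_of_profileVec_eq {u : Fin M → List (Fin q)} {x y : List (Fin q)}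
    (hx : AddressableL q a ℓ M u x) (hy : AddressableL q a ℓ M u y)
    (huinj : Function.Injective u) (hℓ : 2 * a ≤ ℓ)
    (h : profileVec q (M * ℓ) ℓ (wordOfList x hx.1) = profileVec q (M * ℓ) ℓ (wordOfList y hy.1)) :
    x = y := by
  refine List.eq_of_take_drop_mul_eq M hx.1 hy.1 fun i hi => ?_
  have hblock : i * ℓ + ℓ ≤ M * ℓ := by
    rw [← Nat.succ_mul]
    exact Nat.mul_le_mul_right ℓ hi
  have hwlen : ((x.drop (i * ℓ)).take ℓ).length = ℓ := by
    simp only [List.length_take, List.length_drop, hx.1]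
    omega
  have hw : ((x.drop (i * ℓ)).take ℓ).take a = u ⟨i, hi⟩ := by
    rw [List.take_take, min_eq_left (by omega)]
    exact hx.2.1 ⟨i, hi⟩
  have hwint : ∀ j, 1 ≤ j → j + a ≤ ℓ → ∀ m, (((x.drop (i * ℓ)).take ℓ).drop j).take a ≠ u m :=
    fun j hj hja m => by
      rw [List.take_drop_take_of_add_le hja]
      exact hx.2.2 ⟨i, hi⟩ j hj hja m
  have hocc := (profileVec_wordOfList_pos_iff hx.1 hwlen).2 ⟨i * ℓ, hblock, rfl⟩
  rw [h] at hocc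
  obtain ⟨p, hp, hpw⟩ := (profileVec_wordOfList_pos_iff hy.1 hwlen).1 hocc
  rw [← hpw, hy.eq_mul_of_take_drop_eq huinj hℓ hw hwint hp hpw]

lemma card_le_numProfiles {β : Type*} [Fintype β] {n : ℕ} (f : β → Fin n → Fin q)
    (hf : Function.Injective (profileVec q n ℓ ∘ f)) : Fintype.card β ≤ numProfiles q n ℓ :=
  Finset.card_le_card_of_injOn _ (fun _ _ => Finset.mem_image_of_mem _ (Finset.mem_univ _))
    hf.injOn

end Profile

section Count

variable {q N M : ℕ}

def shiftedData (d : Fin M → Fin N → Fin (q - 1)) : Fin M → ℕ → ℕ :=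
  fun i m => if h : m < N then d i ⟨m, h⟩ + 1 else 1

lemma shiftedData_mem (d : Fin M → Fin N → Fin (q - 1)) (i : Fin M) {m : ℕ} (hm : m < N) :
    1 ≤ shiftedData d i m ∧ shiftedData d i m ≤ q - 1 := by
  have := (d i ⟨m, hm⟩).isLt
  simp only [shiftedData, dif_pos hm]
  omega

lemma eq_of_shiftedData_eq {d d' : Fin M → Fin N → Fin (q - 1)}
    (h : ∀ i m, m < N → shiftedData d i m = shiftedData d' i m) : d = d' := by
  funext i m
  have := h i m m.isLt
  simp only [shiftedData, dif_pos m.isLt, Fin.eta] at this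
  exact Fin.ext (by omega)

lemma pow_le_numProfiles {a ℓ : ℕ} (hq : 0 < q) (ha : 1 ≤ a) (hℓ : 2 * a ≤ ℓ)
    {u : Fin M → List (Fin q)} (hulen : ∀ i, (u i).length = a)
    (husum : ∀ i, (((u i).map Fin.val).sum) % q = 0) (huinj : Function.Injective u) :
    (q - 1) ^ (M * (ℓ - a)) ≤ numProfiles q (M * ℓ) ℓ := by
  have hc (d : Fin M → Fin (ℓ - a) → Fin (q - 1)) i m (hm : m < ℓ - a) :=
    shiftedData_mem d i hm
  have haddr (d : Fin M → Fin (ℓ - a) → Fin (q - 1)) :=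
    encode2_addressable hq ha (by omega) hulen husum (hc d)
  calc (q - 1) ^ (M * (ℓ - a)) = Fintype.card (Fin M → Fin (ℓ - a) → Fin (q - 1)) := by
        simp [← pow_mul, mul_comm]
    _ ≤ numProfiles q (M * ℓ) ℓ :=
        card_le_numProfiles (fun d => wordOfList _ (haddr d).1) fun d d' h =>
          eq_of_shiftedData_eq <| eq_of_encode2_eq hq hulen (by omega) (hc d) (hc d') <|
            (haddr d).eq_of_profileVec_eq (haddr d') huinj hℓ h

end Count

/-- With `A*` enumerated by `u`, `M = q^{a−1}` and `2a ≤ ℓ`: `encode₂` is injective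
on valid data, every output is `(A*,ℓ)`-addressable, and consequently
`P_q(q^{a−1}ℓ, ℓ) ≥ (q−1)^{q^{a−1}(ℓ−a)}`. -/
theorem stmt_10 (q a ℓ : ℕ) (hq : 2 ≤ q) (ha : 2 ≤ a) (hℓ : 2 * a ≤ ℓ)
    (u : Fin (q ^ (a - 1)) → List (Fin q))
    (hulen : ∀ i, (u i).length = a)
    (husum : ∀ i, (((u i).map Fin.val).sum) % q = 0)
    (huinj : Function.Injective u) :
    (∀ c c' : Fin (q ^ (a - 1)) → ℕ → ℕ,
      (∀ i m, m < ℓ - a → 1 ≤ c i m ∧ c i m ≤ q - 1) →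
      (∀ i m, m < ℓ - a → 1 ≤ c' i m ∧ c' i m ≤ q - 1) →
      encode2 q a ℓ (q ^ (a - 1)) (by omega) u c =
        encode2 q a ℓ (q ^ (a - 1)) (by omega) u c' →
      ∀ i m, m < ℓ - a → c i m = c' i m) ∧
    (∀ c : Fin (q ^ (a - 1)) → ℕ → ℕ,
      (∀ i m, m < ℓ - a → 1 ≤ c i m ∧ c i m ≤ q - 1) →
      AddressableL q a ℓ (q ^ (a - 1)) u
        (encode2 q a ℓ (q ^ (a - 1)) (by omega) u c)) ∧
    (q - 1) ^ (q ^ (a - 1) * (ℓ - a)) ≤ numProfiles q (q ^ (a - 1) * ℓ) ℓ :=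
  ⟨fun _ _ hc hc' h => eq_of_encode2_eq (by omega) hulen (by omega) hc hc' h,
    fun _ hc => encode2_addressable (by omega) (by omega) (by omega) hulen husum hc,
    pow_le_numProfiles (by omega) (by omega) hℓ hulen husum huinj⟩
end

section
/- Let A = {u_1,...,u_M} be a set of addresses of length a with 2a ≤ ℓ, and let x = z_1⋯z_M be an (A,ℓ)-addressable word. Let r be a Type I read of x, i.e., an ℓ-gram of x whose largest index t with r[t..t+a−1] ∈ A satisfies t ≤ ℓ−2a+2, and suppose r[t..t+a−1] = u_i. Then the unique index j with x[j..j+ℓ−1] = r is j = (i−1)ℓ − t + 2. -/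
/-!
Let `p = j + t` be the position in `x` of the address `u i` seen in the read, and write
`p = cℓ + s` with `0 ≤ s < ℓ`. Addressability forbids an address starting strictly inside a
block unless it runs into the next block, i.e. unless `s + a > ℓ`. In that case block `c + 1`
starts fewer than `a` positions after `p`, so the Type I bound `t + 2a ≤ ℓ + 1` puts its whole
address inside the read, at an offset larger than `t`, contradicting the maximality of `t`. Hence `s = 0`, the address found is that of block `c`, and
injectivity of `u` gives `c = i`.
-/

lemma read_window_iff {α : Type*} {a ℓ : ℕ} {x : ℕ → α} {r : Fin ℓ → α} {j t : ℕ}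
    (hr : ∀ k : Fin ℓ, x (j + k.val) = r k) (hta : t + a ≤ ℓ) (v : Fin a → α) :
    (∀ k : Fin a, ∀ h : t + k.val < ℓ, r ⟨t + k.val, h⟩ = v k) ↔
      ∀ k : Fin a, x (j + t + k.val) = v k := by
  refine forall_congr' fun k => ?_
  have hk : t + k.val < ℓ := by omega
  rw [add_assoc, hr ⟨t + k.val, hk⟩]
  exact ⟨fun h => h hk, fun h _ => h⟩

namespace Addressable

variable {q a ℓ M : ℕ} {u : Fin M → (Fin a → Fin q)} {x : ℕ → Fin q}

lemma eq_of_address_at_block (hx : Addressable q a ℓ M u x) (hu : Function.Injective u)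
    {c m : Fin M} (h : ∀ k : Fin a, x (c.val * ℓ + k.val) = u m k) : c = m :=
  hu (funext fun k => (hx.1 c k).symm.trans (h k))

lemma lt_mod_add_of_address_at (hx : Addressable q a ℓ M u x) {p : ℕ} {m : Fin M}
    (hpM : p < M * ℓ) (h : ∀ k : Fin a, x (p + k.val) = u m k) (hs : p % ℓ ≠ 0) :
    ℓ < p % ℓ + a := by
  have hdm := Nat.div_add_mod' p ℓ
  by_contra! hle
  refine hx.2 ⟨p / ℓ, Nat.div_lt_of_lt_mul (by rwa [mul_comm])⟩ (p % ℓ) (by omega) hle m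
    fun k => ?_
  rw [Fin.val_mk, ← h k]
  congr 1
  omega

end Addressable

theorem stmt_12_general (q a ℓ M : ℕ) (ha : 1 ≤ a)
    (u : Fin M → (Fin a → Fin q)) (hu : Function.Injective u)
    (x : ℕ → Fin q) (hx : Addressable q a ℓ M u x)
    (r : Fin ℓ → Fin q)
    (t : ℕ) (i : Fin M) (hta : t + a ≤ ℓ)
    (hwin : ∀ k : Fin a, ∀ h : t + k.val < ℓ, r ⟨t + k.val, h⟩ = u i k)
    (hmax : ∀ t' : ℕ, t < t' → t' + a ≤ ℓ → ∀ m : Fin M,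
      ¬ (∀ k : Fin a, ∀ h : t' + k.val < ℓ, r ⟨t' + k.val, h⟩ = u m k))
    (htypeI : t + 2 * a ≤ ℓ + 1) :
    ∀ j : ℕ, j + ℓ ≤ M * ℓ → (∀ k : Fin ℓ, x (j + k.val) = r k) →
      j = i.val * ℓ - t := by
  intro j hj hr
  set p := j + t
  have hp : ∀ k : Fin a, x (p + k.val) = u i k := (read_window_iff hr hta _).1 hwin
  have hdm := Nat.div_add_mod' p ℓ
  have hs := Nat.mod_lt p (show 0 < ℓ by omega)
  by_cases hs0 : p % ℓ = 0
  · have hc : p / ℓ < M := Nat.lt_of_mul_lt_mul_right (a := ℓ) (by omega)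
    have hpc : p / ℓ * ℓ = p := by omega
    have hci : (⟨p / ℓ, hc⟩ : Fin M) = i :=
      hx.eq_of_address_at_block hu fun k => by rw [Fin.val_mk, hpc]; exact hp k
    have hip : i.val * ℓ = p := by rw [← hci, Fin.val_mk, hpc]
    omega
  · have hstraddle := hx.lt_mod_add_of_address_at (by omega) hp hs0
    have hnext : j + (t + (ℓ - p % ℓ)) = (p / ℓ + 1) * ℓ := by rw [add_one_mul]; omega
    have hc : p / ℓ + 1 < M := Nat.lt_of_mul_lt_mul_right (a := ℓ) (by omega)
    refine absurd ((read_window_iff (t := t + (ℓ - p % ℓ)) hr (by omega) _).2 fun k => ?_)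
      (hmax _ (by omega) (by omega) ⟨p / ℓ + 1, hc⟩)
    rw [hnext]
    exact hx.1 ⟨p / ℓ + 1, hc⟩ k

/-- Alignment lemma: let `r` be a Type I read of the `(A,ℓ)`-addressable word `x`,
i.e. the largest (0-indexed) position `t` with `r[t..t+a−1] ∈ A` satisfies
`t ≤ ℓ − 2a + 1` (0-indexed), and suppose `r[t..t+a−1] = u i`. Then the unique
position at which `r` occurs in `x` is `j = iℓ − t` (0-indexed version of
`(i−1)ℓ − t + 2`). -/
theorem stmt_12 (q a ℓ M : ℕ) (ha : 1 ≤ a) (hℓ : 2 * a ≤ ℓ)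
    (u : Fin M → (Fin a → Fin q)) (hu : Function.Injective u)
    (x : ℕ → Fin q) (hx : Addressable q a ℓ M u x)
    (r : Fin ℓ → Fin q)
    (hocc : ∃ j : ℕ, j + ℓ ≤ M * ℓ ∧ ∀ k : Fin ℓ, x (j + k.val) = r k)
    (t : ℕ) (i : Fin M) (hta : t + a ≤ ℓ)
    (hwin : ∀ k : Fin a, ∀ h : t + k.val < ℓ, r ⟨t + k.val, h⟩ = u i k)
    (hmax : ∀ t' : ℕ, t < t' → t' + a ≤ ℓ → ∀ m : Fin M,
      ¬ (∀ k : Fin a, ∀ h : t' + k.val < ℓ, r ⟨t' + k.val, h⟩ = u m k))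
    (htypeI : t + 2 * a ≤ ℓ + 1) :
    ∀ j : ℕ, j + ℓ ≤ M * ℓ → (∀ k : Fin ℓ, x (j + k.val) = r k) →
      j = i.val * ℓ - t :=
  stmt_12_general q a ℓ M ha u hu x hx r t i hta hwin hmax htypeI
end

section
/- Let x = z_1⋯z_M be an (A,ℓ)-addressable word of length n = Mℓ with 2a ≤ ℓ. For 1 ≤ j ≤ n−ℓ+1, the ℓ-gram x[j..j+ℓ−1] is a Type I read if and only if j mod ℓ ∉ {2,3,...,2a−1}. -/
section Addresses

variable {q a ℓ M : ℕ} {u : Fin M → Fin a → Fin q} {x : ℕ → Fin q}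

def AddressAt (u : Fin M → Fin a → Fin q) (x : ℕ → Fin q) (p : ℕ) : Prop :=
  ∃ m : Fin M, ∀ k : Fin a, x (p + k.val) = u m k

/-- The paper's `L(r)` for the read `r = x[j..j+ℓ−1]` is one more than the greatest element. -/
def readAddresses (u : Fin M → Fin a → Fin q) (x : ℕ → Fin q) (ℓ j : ℕ) : Set ℕ :=
  {t | t + a ≤ ℓ ∧ AddressAt u x (j + t)}

theorem exists_isGreatest_readAddresses_iff (u : Fin M → Fin a → Fin q) (x : ℕ → Fin q)
    (ℓ j : ℕ) (Q : ℕ → Prop) :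
    (∃ t : ℕ, t + a ≤ ℓ ∧ Q t ∧ AddressAt u x (j + t) ∧
      ∀ t' : ℕ, t < t' → t' + a ≤ ℓ → ¬ AddressAt u x (j + t')) ↔
    ∃ t, IsGreatest (readAddresses u x ℓ j) t ∧ Q t := by
  refine exists_congr fun t => ⟨?_, ?_⟩
  · rintro ⟨hta, hQ, hA, hmax⟩
    exact ⟨⟨⟨hta, hA⟩, fun t' ⟨ht'a, hA'⟩ => not_lt.1 fun h => hmax t' h ht'a hA'⟩, hQ⟩
  · rintro ⟨⟨⟨hta, hA⟩, hmax⟩, hQ⟩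
    exact ⟨hta, hQ, hA, fun t' h ht'a hA' => (hmax ⟨ht'a, hA'⟩).not_gt h⟩

namespace Addressable

theorem addressAt_mul (hx : Addressable q a ℓ M u x) {i : ℕ} (hi : i < M) :
    AddressAt u x (i * ℓ) :=
  ⟨⟨i, hi⟩, hx.1 ⟨i, hi⟩⟩

theorem not_addressAt_mul_add (hx : Addressable q a ℓ M u x) {i s : ℕ} (hi : i < M)
    (hs : 1 ≤ s) (hsa : s + a ≤ ℓ) : ¬ AddressAt u x (i * ℓ + s) :=
  fun ⟨m, hm⟩ => hx.2 ⟨i, hi⟩ s hs hsa m hm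

theorem isGreatest_readAddresses_mul (hx : Addressable q a ℓ M u x) {i : ℕ} (hi : i < M)
    (haℓ : a ≤ ℓ) : IsGreatest (readAddresses u x ℓ (i * ℓ)) 0 := by
  refine ⟨⟨by omega, hx.addressAt_mul hi⟩, fun t ⟨hta, hA⟩ => ?_⟩
  by_contra! ht
  exact hx.not_addressAt_mul_add hi ht hta hA

theorem isGreatest_readAddresses_mul_add (hx : Addressable q a ℓ M u x) {i r : ℕ}
    (hi : i + 1 < M) (har : a ≤ r) (hrℓ : r ≤ ℓ) :
    IsGreatest (readAddresses u x ℓ (i * ℓ + r)) (ℓ - r) := by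
  have hpos : ∀ t, ℓ ≤ r + t → i * ℓ + r + t = (i + 1) * ℓ + (r + t - ℓ) := by
    intro t ht
    rw [add_one_mul]
    omega
  refine ⟨⟨by omega, ?_⟩, fun t ⟨hta, hA⟩ => ?_⟩
  · rw [hpos _ (by omega), show r + (ℓ - r) - ℓ = 0 by omega, add_zero]
    exact hx.addressAt_mul hi
  · by_contra! ht
    rw [hpos t (by omega)] at hA
    exact hx.not_addressAt_mul_add hi (by omega) (by omega) hA

end Addressable

end Addresses

/-- Indices are 0-based: `t + 2 * a ≤ ℓ + 1` is the paper's `L(r) ≤ ℓ − 2a + 2`, and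
`j % ℓ ∉ {1,…,2a−2}` is its `j mod ℓ ∉ {2,…,2a−1}`. -/
theorem stmt_13_general (q a ℓ M : ℕ) (ha : 1 ≤ a) (hℓ : 2 * a ≤ ℓ)
    (u : Fin M → (Fin a → Fin q))
    (x : ℕ → Fin q) (hx : Addressable q a ℓ M u x)
    (j : ℕ) (hj : j + ℓ ≤ M * ℓ) :
    (∃ t : ℕ, t + a ≤ ℓ ∧ t + 2 * a ≤ ℓ + 1 ∧
      (∃ m : Fin M, ∀ k : Fin a, x (j + t + k.val) = u m k) ∧
      (∀ t' : ℕ, t < t' → t' + a ≤ ℓ → ∀ m : Fin M,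
        ¬ (∀ k : Fin a, x (j + t' + k.val) = u m k))) ↔
    ¬ (1 ≤ j % ℓ ∧ j % ℓ + 2 ≤ 2 * a) := by
  have key := exists_isGreatest_readAddresses_iff u x ℓ j (fun t => t + 2 * a ≤ ℓ + 1)
  simp only [AddressAt, not_exists] at key
  rw [key]
  obtain ⟨i, r, hr, rfl⟩ : ∃ i r, r < ℓ ∧ j = i * ℓ + r :=
    ⟨j / ℓ, j % ℓ, Nat.mod_lt _ (by omega), (Nat.div_add_mod' j ℓ).symm⟩
  rw [Nat.mul_add_mod', Nat.mod_eq_of_lt hr]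
  have hi : i < M := Nat.lt_of_mul_lt_mul_right (a := ℓ) (by omega)
  rcases Nat.eq_zero_or_pos r with rfl | hr1
  · exact iff_of_true ⟨0, hx.isGreatest_readAddresses_mul hi (by omega), by omega⟩ (by omega)
  have hi1 : i + 1 < M := Nat.lt_of_mul_lt_mul_right (a := ℓ) (by rw [add_one_mul]; omega)
  rcases le_or_gt a r with har | hra
  · have hG := hx.isGreatest_readAddresses_mul_add hi1 har hr.le
    exact ⟨fun ⟨t, ht, hQ⟩ => by rw [ht.unique hG] at hQ; omega, fun h => ⟨_, hG, by omega⟩⟩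
  · refine iff_of_false (fun ⟨t, ⟨⟨hta, hA⟩, _⟩, hQ⟩ => ?_) (by omega)
    rw [add_assoc] at hA
    exact hx.not_addressAt_mul_add hi (by omega) (by omega) hA

/-- The read `x[j..j+ℓ−1]` (0-indexed `j`) of an `(A,ℓ)`-addressable word `x` is a
Type I read (the largest `t` with an address at `t` satisfies `t ≤ ℓ − 2a + 1`,
0-indexed) if and only if `j mod ℓ ∉ {1,…,2a−2}` (0-indexed version of
`j mod ℓ ∉ {2,…,2a−1}`). -/
theorem stmt_13 (q a ℓ M : ℕ) (ha : 1 ≤ a) (hℓ : 2 * a ≤ ℓ)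
    (u : Fin M → (Fin a → Fin q)) (hu : Function.Injective u)
    (x : ℕ → Fin q) (hx : Addressable q a ℓ M u x)
    (j : ℕ) (hj : j + ℓ ≤ M * ℓ) :
    (∃ t : ℕ, t + a ≤ ℓ ∧ t + 2 * a ≤ ℓ + 1 ∧
      (∃ m : Fin M, ∀ k : Fin a, x (j + t + k.val) = u m k) ∧
      (∀ t' : ℕ, t < t' → t' + a ≤ ℓ → ∀ m : Fin M,
        ¬ (∀ k : Fin a, x (j + t' + k.val) = u m k))) ↔
    ¬ (1 ≤ j % ℓ ∧ j % ℓ + 2 ≤ 2 * a) :=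
  stmt_13_general q a ℓ M ha hℓ u x hx j hj
end

section
/- Let x be an (A,ℓ)-addressable word of length n = Mℓ with 2a ≤ ℓ. Every symbol x[i] with ℓ ≤ i ≤ n−ℓ is covered by exactly ℓ−2a+2 Type I reads, and every symbol of x is covered by at least one Type I read. -/
attribute [local instance] Classical.propDecidable

/-- The read of `x` starting at (0-indexed) position `j` is a Type I read:
the largest `t` with an address occurring in the read at position `t`
satisfies `t ≤ ℓ − 2a + 1` (0-indexed). -/
def TypeIAt (q a ℓ M : ℕ) (u : Fin M → (Fin a → Fin q)) (x : ℕ → Fin q) (j : ℕ) : Prop :=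
  ∃ t : ℕ, t + a ≤ ℓ ∧ t + 2 * a ≤ ℓ + 1 ∧
    (∃ m : Fin M, ∀ k : Fin a, x (j + t + k.val) = u m k) ∧
    (∀ t' : ℕ, t < t' → t' + a ≤ ℓ → ∀ m : Fin M,
      ¬ (∀ k : Fin a, x (j + t' + k.val) = u m k))

/-!
An address occurs at a position `p < Mℓ` with `p % ℓ + a ≤ ℓ` exactly when `ℓ ∣ p`. So the last
address seen by the read starting at `j` is at offset `0` when `ℓ ∣ j`, at offset `ℓ - j % ℓ`
when `j % ℓ ≥ a`, and at no offset `≤ ℓ - 2a + 1` when `0 < j % ℓ < a`: the read is of Type I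
exactly when `j % ℓ = 0` or `j % ℓ ≥ 2a - 1`. The `ℓ` reads covering a symbol have pairwise
distinct starting residues mod `ℓ`, so `ℓ - 2a + 2` of them are of Type I, and the read starting
at the block boundary to the left of any symbol is one.
-/

open Finset

lemma card_filter_mod_Ico (n ℓ : ℕ) (P : ℕ → Prop) [DecidablePred P] :
    #{j ∈ Ico n (n + ℓ) | P (j % ℓ)} = #{r ∈ range ℓ | P r} := by
  rw [← Nat.image_Ico_mod n ℓ, filter_image,
    card_image_of_injOn ((Nat.mod_injOn_Ico n ℓ).mono (filter_subset _ _))]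

lemma card_filter_eq_zero_or_le_range {c ℓ : ℕ} (hc : 2 ≤ c) (hcℓ : c ≤ ℓ) :
    #{r ∈ range ℓ | r = 0 ∨ c ≤ r + 1} = ℓ + 2 - c := by
  have : {r ∈ range ℓ | r = 0 ∨ c ≤ r + 1} = insert 0 (Ico (c - 1) ℓ) := by
    ext r
    simp only [mem_filter, mem_range, mem_insert, mem_Ico]
    omega
  rw [this, card_insert_of_notMem (by simp only [mem_Ico]; omega), Nat.card_Ico]
  omega

lemma Nat.add_mod_cases {j t ℓ : ℕ} (ht : t < ℓ) :
    (j % ℓ + t < ℓ ∧ (j + t) % ℓ = j % ℓ + t) ∨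
      (ℓ ≤ j % ℓ + t ∧ (j + t) % ℓ + ℓ = j % ℓ + t) := by
  have htℓ : t % ℓ = t := Nat.mod_eq_of_lt ht
  rcases lt_or_ge (j % ℓ + t) ℓ with h | h
  · exact .inl ⟨h, by rw [Nat.add_mod_of_add_mod_lt (by rwa [htℓ]), htℓ]⟩
  · exact .inr ⟨h, by rw [Nat.add_mod_add_of_le_add_mod (by rwa [htℓ]), htℓ]⟩

def OccursAt {q a M : ℕ} (u : Fin M → Fin a → Fin q) (x : ℕ → Fin q) (p : ℕ) : Prop :=
  ∃ m, ∀ k : Fin a, x (p + k) = u m k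

section

variable {q a ℓ M : ℕ} {u : Fin M → Fin a → Fin q} {x : ℕ → Fin q} {j : ℕ}

lemma typeIAt_iff_occursAt :
    TypeIAt q a ℓ M u x j ↔ ∃ t, t + a ≤ ℓ ∧ t + 2 * a ≤ ℓ + 1 ∧ OccursAt u x (j + t) ∧
      ∀ t', t < t' → t' + a ≤ ℓ → ¬ OccursAt u x (j + t') := by
  simp only [TypeIAt, OccursAt, not_exists]

lemma Addressable.occursAt_iff (hx : Addressable q a ℓ M u x) {p : ℕ} (hp : p < M * ℓ)
    (hpa : p % ℓ + a ≤ ℓ) : OccursAt u x p ↔ p % ℓ = 0 := by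
  have hℓ : 0 < ℓ := Nat.pos_of_ne_zero (by rintro rfl; simp at hp)
  set i : Fin M := ⟨p / ℓ, (Nat.div_lt_iff_lt_mul hℓ).mpr hp⟩
  have hp_eq : i.val * ℓ + p % ℓ = p := Nat.div_add_mod' p ℓ
  constructor
  · rintro ⟨m, hm⟩
    by_contra h0
    exact hx.2 i (p % ℓ) (Nat.one_le_iff_ne_zero.mpr h0) hpa m (by rwa [hp_eq])
  · intro h0
    rw [h0, add_zero] at hp_eq
    exact ⟨i, hp_eq ▸ hx.1 i⟩

lemma Addressable.typeIAt_of_mod (hx : Addressable q a ℓ M u x) (ha : 1 ≤ a) (hℓ : 2 * a ≤ ℓ)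
    (hj : j + ℓ ≤ M * ℓ) (hr : j % ℓ = 0 ∨ 2 * a ≤ j % ℓ + 1) : TypeIAt q a ℓ M u x j := by
  have hrℓ : j % ℓ < ℓ := Nat.mod_lt j (by omega)
  rw [typeIAt_iff_occursAt]
  rcases hr with h0 | hr
  · refine ⟨0, by omega, by omega, ?_, fun t' ht' ht'a => ?_⟩
    · rw [add_zero, hx.occursAt_iff (by omega) (by omega)]
      exact h0
    · rcases Nat.add_mod_cases (j := j) (show t' < ℓ by omega) with ⟨-, h⟩ | ⟨h, -⟩
      · rw [hx.occursAt_iff (by omega) (by omega)]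
        omega
      · omega
  · refine ⟨ℓ - j % ℓ, by omega, by omega, ?_, fun t' ht' ht'a => ?_⟩
    · rcases Nat.add_mod_cases (j := j) (show ℓ - j % ℓ < ℓ by omega) with ⟨h, -⟩ | ⟨-, h⟩
      · omega
      · rw [hx.occursAt_iff (by omega) (by omega)]
        omega
    · rcases Nat.add_mod_cases (j := j) (show t' < ℓ by omega) with ⟨h, -⟩ | ⟨-, h⟩
      · omega
      · rw [hx.occursAt_iff (by omega) (by omega)]
        omega

lemma Addressable.mod_of_typeIAt (hx : Addressable q a ℓ M u x) (hℓ : 2 * a ≤ ℓ)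
    (hj : j + ℓ ≤ M * ℓ) (h : TypeIAt q a ℓ M u x j) : j % ℓ = 0 ∨ 2 * a ≤ j % ℓ + 1 := by
  obtain ⟨t, hta, ht2a, hocc, hlast⟩ := typeIAt_iff_occursAt.1 h
  by_contra! hr
  have hrℓ : j % ℓ < ℓ := Nat.mod_lt j (by omega)
  rcases le_or_gt a (j % ℓ) with hra | hra
  · -- the address opening the next block lies beyond offset `t`
    apply hlast (ℓ - j % ℓ) (by omega) (by omega)
    rcases Nat.add_mod_cases (j := j) (show ℓ - j % ℓ < ℓ by omega) with ⟨h, -⟩ | ⟨-, h⟩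
    · omega
    · rw [hx.occursAt_iff (by omega) (by omega)]
      omega
  · -- the address at offset `t` would start strictly inside the current block
    rcases Nat.add_mod_cases (j := j) (show t < ℓ by omega) with ⟨-, h⟩ | ⟨h, -⟩
    · rw [hx.occursAt_iff (by omega) (by omega)] at hocc
      omega
    · omega

end

theorem stmt_14_general (q a ℓ M : ℕ) (ha : 1 ≤ a) (hℓ : 2 * a ≤ ℓ)
    (u : Fin M → (Fin a → Fin q))
    (x : ℕ → Fin q) (hx : Addressable q a ℓ M u x) :
    (∀ i : ℕ, ℓ - 1 ≤ i → i + ℓ + 1 ≤ M * ℓ →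
      ((Finset.range (M * ℓ + 1 - ℓ)).filter
        (fun j => j ≤ i ∧ i < j + ℓ ∧ TypeIAt q a ℓ M u x j)).card = ℓ - 2 * a + 2) ∧
    (∀ i : ℕ, i < M * ℓ →
      ∃ j : ℕ, j + ℓ ≤ M * ℓ ∧ j ≤ i ∧ i < j + ℓ ∧ TypeIAt q a ℓ M u x j) := by
  have hℓpos : 0 < ℓ := by omega
  refine ⟨fun i hi hiM => ?_, fun i hi => ?_⟩
  · have hreads : {j ∈ range (M * ℓ + 1 - ℓ) | j ≤ i ∧ i < j + ℓ ∧ TypeIAt q a ℓ M u x j} =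
        {j ∈ Ico (i + 1 - ℓ) (i + 1 - ℓ + ℓ) | j % ℓ = 0 ∨ 2 * a ≤ j % ℓ + 1} := by
      ext j
      simp only [mem_filter, mem_range, mem_Ico]
      constructor
      · rintro ⟨-, hji, hij, hI⟩
        exact ⟨⟨by omega, by omega⟩, hx.mod_of_typeIAt hℓ (by omega) hI⟩
      · rintro ⟨⟨hij, hji⟩, hr⟩
        exact ⟨by omega, by omega, by omega, hx.typeIAt_of_mod ha hℓ (by omega) hr⟩
    rw [hreads, card_filter_mod_Ico _ _ (fun r => r = 0 ∨ 2 * a ≤ r + 1),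
      card_filter_eq_zero_or_le_range (by omega) hℓ]
    omega
  · have hblock : ℓ * (i / ℓ + 1) ≤ ℓ * M :=
      Nat.mul_le_mul_left ℓ ((Nat.div_lt_iff_lt_mul hℓpos).2 hi)
    have hi_lt : i < ℓ * (i / ℓ + 1) := Nat.lt_mul_div_succ i hℓpos
    rw [Nat.mul_add_one] at hblock hi_lt
    refine ⟨ℓ * (i / ℓ), by linarith, Nat.mul_div_le i ℓ, hi_lt,
      hx.typeIAt_of_mod ha hℓ (by linarith) (.inl (Nat.mul_mod_right ℓ _))⟩

/-- In an `(A,ℓ)`-addressable word of length `n = Mℓ` with `2a ≤ ℓ`: every symbol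
`x[i]` with `ℓ − 1 ≤ i ≤ n − ℓ − 1` (0-indexed version of `ℓ ≤ i ≤ n − ℓ`) is
covered by exactly `ℓ − 2a + 2` Type I reads, and every symbol is covered by at
least one Type I read. -/
theorem stmt_14 (q a ℓ M : ℕ) (ha : 1 ≤ a) (hℓ : 2 * a ≤ ℓ) (hM : 1 ≤ M)
    (u : Fin M → (Fin a → Fin q)) (hu : Function.Injective u)
    (x : ℕ → Fin q) (hx : Addressable q a ℓ M u x) :
    (∀ i : ℕ, ℓ - 1 ≤ i → i + ℓ + 1 ≤ M * ℓ →
      ((Finset.range (M * ℓ + 1 - ℓ)).filter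
        (fun j => j ≤ i ∧ i < j + ℓ ∧ TypeIAt q a ℓ M u x j)).card = ℓ - 2 * a + 2) ∧
    (∀ i : ℕ, i < M * ℓ →
      ∃ j : ℕ, j + ℓ ≤ M * ℓ ∧ j ≤ i ∧ i < j + ℓ ∧ TypeIAt q a ℓ M u x j) :=
  stmt_14_general q a ℓ M ha hℓ u x hx
end
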